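/- arXiv:2108.00935 — 7 statements merged into one kernel-verified Lean document; each statement's English description precedes it below -/
import Mathlib

section
/- Let V be a real vector space with an endomorphism J satisfying J² = −Id, and let d be a derivation-like operation such that for a 1-form η one defines (i_J dη)(X,Y) = dη(JX,Y) + dη(X,JY). If η = −i_J(df) for a function f (i.e., locally θ = df and η = −i_J θ), then (i_J d)² f (X,Y) = N_J(X,Y)f, where N_J is the Nijenhuis torsion of J. Consequently, if J is integrable (N_J = 0), then i_J dη = 0. -/
/-- Model: `A` is the ring of smooth functions, `Xv` the Lie algebra of vector fields
acting on functions via `act` (an action by derivations).  For a function `f`,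
`df(X) = act X f`, and for a 1-form `α` the exterior differential is
`dα(X,Y) = act X (α Y) - act Y (α X) - α ⁅X,Y⁆`; `i_J` of a 1-form is `α ∘ J`
and of a 2-form `β` is `β(J·,·) + β(·,J·)`.  The Nijenhuis torsion of `J`
(with `J² = -Id`) is `N_J(X,Y) = ⁅JX,JY⁆ - J⁅JX,Y⁆ - J⁅X,JY⁆ - ⁅X,Y⁆`.
Claim: `(i_J d)² f (X,Y) = act (N_J X Y) f`, and consequently, if `N_J = 0`,
then `i_J dη = 0` for `η = -i_J (df)`. -/
theorem statement0
    (A : Type*) [CommRing A] (Xv : Type*) [LieRing Xv]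
    (act : Xv → A → A)
    (hactAdd : ∀ X Y a, act (X + Y) a = act X a + act Y a)
    (hactNeg : ∀ X a, act (-X) a = -(act X a))
    (hactLie : ∀ X Y a, act ⁅X, Y⁆ a = act X (act Y a) - act Y (act X a))
    (J : Xv → Xv) (hJJ : ∀ X, J (J X) = -X)
    (NJ : Xv → Xv → Xv)
    (hNJ : ∀ X Y, NJ X Y = ⁅J X, J Y⁆ - J ⁅J X, Y⁆ - J ⁅X, J Y⁆ - ⁅X, Y⁆) :
    (∀ (f : A) (X Y : Xv),
      -- (i_J d)² f (X,Y), with α = i_J(df), i.e. α Z = act (J Z) f: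
      (act (J X) (act (J Y) f) - act Y (act (J (J X)) f) - act (J ⁅J X, Y⁆) f)
        + (act X (act (J (J Y)) f) - act (J Y) (act (J X) f) - act (J ⁅X, J Y⁆) f)
        = act (NJ X Y) f)
    ∧ ((∀ X Y, NJ X Y = 0) →
      ∀ (f : A) (X Y : Xv),
        -- i_J dη (X,Y) = 0 for η = -i_J(df), i.e. η Z = -(act (J Z) f):
        (act (J X) (-(act (J Y) f)) - act Y (-(act (J (J X)) f)) - (-(act (J ⁅J X, Y⁆) f)))
          + (act X (-(act (J (J Y)) f)) - act (J Y) (-(act (J X) f)) - (-(act (J ⁅X, J Y⁆) f)))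
          = 0) := by
  have hact0 : ∀ a : A, act (0 : Xv) a = 0 := by
    intro a
    have h := hactAdd 0 0 a
    rw [add_zero] at h
    linear_combination -h
  have key : ∀ (X Y : Xv) (a : A), act X (-(act Y a)) = -(act X (act Y a)) := by
    intro X Y a
    have h1 := hactLie X Y a
    have h2 := hactLie X (-Y) a
    rw [lie_neg, hactNeg, hactNeg, hactNeg] at h2
    linear_combination -h1 - h2
  have main : ∀ (f : A) (X Y : Xv),
      (act (J X) (act (J Y) f) - act Y (act (J (J X)) f) - act (J ⁅J X, Y⁆) f)
        + (act X (act (J (J Y)) f) - act (J Y) (act (J X) f) - act (J ⁅X, J Y⁆) f)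
        = act (NJ X Y) f := by
    intro f X Y
    rw [hNJ]
    simp only [sub_eq_add_neg, hactAdd, hactNeg, hJJ, neg_neg, key, hactLie]
    ring
  refine ⟨main, fun hzero f X Y => ?_⟩
  have h := main f X Y
  rw [hzero, hact0] at h
  simp only [hJJ, hactNeg, neg_neg, key] at h ⊢
  linear_combination -h
end

section
/- Let (M,J,g) be an LCK manifold whose anti-Lee vector field V is Killing. Then L_V J = 0, and consequently the Lee vector field U and the anti-Lee vector field V commute: [U,V] = 0. -/
/-- Model: `W` is the Lie algebra of vector fields of an LCK manifold, `g` the metric,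
`J` the complex structure, `U` the Lee field, `V = JU` the anti-Lee field,
`LVg = L_V g`, and `LVJ = L_V J`, the latter given by its defining formula
`(L_V J)X = ⁅V, JX⁆ - J⁅V, X⁆`.  The hypothesis `hLVOmega` encodes `L_V Ω = 0`
(valid on every LCK manifold) expanded by Leibniz.  If `V` is Killing
(`L_V g = 0`) then `L_V J = 0` and consequently `⁅U, V⁆ = 0`. -/
theorem statement2
    (W : Type*) [LieRing W] [LieAlgebra ℝ W]
    (g LVg : W →ₗ[ℝ] W →ₗ[ℝ] ℝ) (J LVJ : W →ₗ[ℝ] W) (U V : W)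
    (hJJ : ∀ X, J (J X) = -X)
    (hgsym : ∀ X Y, g X Y = g Y X)
    (hnd : ∀ X, (∀ Y, g X Y = 0) → X = 0)
    (hV : V = J U)
    (hLVJ : ∀ X, LVJ X = ⁅V, J X⁆ - J ⁅V, X⁆)
    (hLVOmega : ∀ X Y, LVg X (J Y) + g X (LVJ Y) = 0)
    (hKilling : ∀ X Y, LVg X Y = 0) :
    LVJ = 0 ∧ ⁅U, V⁆ = 0 := by
  have hz : ∀ Y, LVJ Y = 0 := by
    intro Y
    apply hnd
    intro X
    have := hLVOmega X Y
    rw [hKilling X (J Y), zero_add] at this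
    rw [hgsym]; exact this
  constructor
  · ext Y; simp [hz Y]
  · have h := hLVJ U
    rw [hz U, ← hV, lie_self] at h
    have h2 : J ⁅V, U⁆ = 0 := by
      have := h.symm
      rwa [zero_sub, neg_eq_zero] at this
    have h3 : ⁅V, U⁆ = 0 := by
      have := congrArg J h2
      rw [hJJ, map_zero] at this
      exact neg_eq_zero.mp this
    rw [← lie_skew, h3, neg_zero]
end

section
/- Let (M^{2n+2},J,g) be a compact integrable LCK manifold whose anti-Lee vector field V is Killing and |θ| is constant. Then a contradiction arises: [U,V] = 0 forces (δθ + n|θ|²)V = 0, so δθ = −n|θ|² is a nonzero constant, contradicting that δθ integrates to zero on a compact manifold. Hence no such compact M exists. -/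
/-- Same model of an integrable LCK manifold `M^{2n+2}` as in Statement 5 (here with
`A` an ℝ-algebra of functions), with: the anti-Lee field `V` Killing, whence
`⁅U,V⁆ = 0`; `|θ|` constant (`act X (θ U) = 0` for all `X`); `V` nowhere zero;
`g` nondegenerate; and compactness encoded by an integration functional
`Int : A →ₗ[ℝ] ℝ` which is positive on the positive function `|θ|²` and kills
the codifferential `δθ` (Stokes).  Then a contradiction arises:
`[U,V] = (δθ + n|θ|²)V + J(grad|θ|²) = 0` forces `δθ = -n|θ|²`, a nonzero
constant whose integral cannot vanish.  Hence no such compact `M` exists. -/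
theorem statement8
    (A : Type*) [CommRing A] [Algebra ℝ A] (Xv : Type*) [LieRing Xv] [Module A Xv]
    (n : ℕ)
    (act : Xv → A → A)
    (hactAdd : ∀ X a b, act X (a + b) = act X a + act X b)
    (hactLeib : ∀ X a b, act X (a * b) = act X a * b + a * act X b)
    (hactLie : ∀ X Y a, act ⁅X, Y⁆ a = act X (act Y a) - act Y (act X a))
    (g : Xv → Xv → A) (J : Xv → Xv) (θ η : Xv → A) (U V : Xv)
    (Ω : Xv → Xv → A) (dη : Xv → Xv → A)
    (hgsym : ∀ X Y, g X Y = g Y X)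
    (hJJ : ∀ X, J (J X) = -X)
    (hherm : ∀ X Y, g (J X) (J Y) = g X Y)
    (hΩ : ∀ X Y, Ω X Y = g X (J Y))
    (hθ : ∀ X, θ X = g U X)
    (hη : ∀ X, η X = g V X)
    (hVJU : V = J U)
    (hanti : ∀ X, η X = -θ (J X))
    (hdθ : ∀ X Y, act X (θ Y) - act Y (θ X) - θ ⁅X, Y⁆ = 0)
    (hdη : ∀ X Y, dη X Y = act X (η Y) - act Y (η X) - η ⁅X, Y⁆)
    (hLCK : ∀ X Y Z,
      act X (Ω Y Z) - act Y (Ω X Z) + act Z (Ω X Y)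
        - Ω ⁅X, Y⁆ Z + Ω ⁅X, Z⁆ Y - Ω ⁅Y, Z⁆ X
      = θ X * Ω Y Z - θ Y * Ω X Z + θ Z * Ω X Y)
    (hiJdη : ∀ X Y, dη (J X) Y + dη X (J Y) = 0)
    (hVnz : IsUnit (g V V))
    (hint : ∀ X Y Z, η X * dη Y Z - η Y * dη X Z + η Z * dη X Y = 0)
    -- Levi-Civita connection and orthonormal frame:
    (nabla : Xv → Xv → Xv)
    (hmetric : ∀ X Y Z, act X (g Y Z) = g (nabla X Y) Z + g Y (nabla X Z))
    (htorsion : ∀ X Y, nabla X Y - nabla Y X = ⁅X, Y⁆)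
    (E : Fin (2 * n + 2) → Xv)
    (hframe : ∀ i j, g (E i) (E j) = if i = j then 1 else 0)
    (δθ : A)
    (hδθ : δθ = -∑ i, g (nabla (E i) U) (E i))
    (invsq : A) (hinv : invsq * θ U = 1)
    (G : Xv) (hG : ∀ X, g G X = act X (θ U))
    (hn : 0 < n)
    (hbracket : ⁅U, V⁆ = (δθ + (n : A) * θ U) • V + J G)
    (hVKilling : ⁅U, V⁆ = 0)
    (hconst : ∀ X, act X (θ U) = 0)
    (hnd : ∀ X : Xv, (∀ Y, g X Y = 0) → X = 0)
    (hJ0 : J 0 = 0)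
    (hVnowhere : ∀ a : A, a • V = 0 → a = 0)
    (Int : A →ₗ[ℝ] ℝ)
    (hStokes : Int δθ = 0)
    (hIntpos : 0 < Int (θ U)) :
    False := by
  have hG0 : G = 0 := by
    apply hnd
    intro Y
    rw [hG Y, hconst]
  have h1 : (δθ + (n : A) * θ U) • V = 0 := by
    have := hbracket
    rw [hVKilling, hG0, hJ0] at this
    have h := this.symm
    simpa using h
  have h2 : δθ + (n : A) * θ U = 0 := hVnowhere _ h1
  have h3 : δθ = -((n : A) * θ U) := by linear_combination h2
  have h4 : (n : A) * θ U = (n : ℝ) • θ U := by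
    rw [Algebra.smul_def]
    norm_num
  have h5 : Int δθ = -(n * Int (θ U)) := by
    rw [h3, h4]
    simp
  rw [hStokes] at h5
  have : (0:ℝ) < n * Int (θ U) := by positivity
  linarith
end

section
/- Let g be an integrable LCK Lie algebra with Lee vector U, anti-Lee vector V = JU, |θ| = 1. Then h := ⟨U,V⟩^⊥ is an ideal of g which is J-invariant, and the restriction of (g,J,Ω) to h is a Kähler structure (i.e., the pullback ω of Ω to h is closed, and g'|_h is positive definite Hermitian with respect to J|_h). -/
/-- An integrable LCK Lie algebra: a real Lie algebra `L` with positive definite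
symmetric `g`, complex structure `J` (`J² = -Id`, vanishing Nijenhuis torsion,
`g` Hermitian), Lee form `θ = g(U,·)` closed, `Ω(X,Y) = g(X,JY)` with
`dΩ = θ∧Ω` (Chevalley–Eilenberg differential, `dα(X,Y) = -α⁅X,Y⁆` on forms
on a Lie algebra), anti-Lee vector `V = JU`, `η = g(V,·) = -θ∘J`, normalization
`|θ| = 1`, and integrability `η ∧ dη = 0`.
Conclusion: `h := ⟨U,V⟩^⊥ = ker g(U,·) ⊓ ker g(V,·)` is an ideal, is
`J`-invariant, the pullback of `Ω` to `h` is closed, and `g` restricted to `h`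
is positive definite and Hermitian: `h` is a Kähler ideal. -/
theorem statement9
    (L : Type*) [LieRing L] [LieAlgebra ℝ L]
    (g : L →ₗ[ℝ] L →ₗ[ℝ] ℝ) (J : L →ₗ[ℝ] L) (U V : L)
    (hgsym : ∀ (X Y : L), g X Y = g Y X)
    (hgpos : ∀ (X : L), X ≠ 0 → 0 < g X X)
    (hJJ : ∀ (X : L), J (J X) = -X)
    (hherm : ∀ (X Y : L), g (J X) (J Y) = g X Y)
    (hNJ : ∀ (X Y : L), ⁅J X, J Y⁆ - J ⁅J X, Y⁆ - J ⁅X, J Y⁆ - ⁅X, Y⁆ = 0)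
    (hVJU : V = J U)
    (hanti : ∀ (X : L), g V X = -(g U (J X)))
    (hnorm : g U U = 1)
    (hdθ : ∀ (X Y : L), g U ⁅X, Y⁆ = 0)
    (hLCK : ∀ (X Y Z : L),
      -(g ⁅X, Y⁆ (J Z)) + g ⁅X, Z⁆ (J Y) - g ⁅Y, Z⁆ (J X)
      = g U X * g Y (J Z) - g U Y * g X (J Z) + g U Z * g X (J Y))
    (hint : ∀ (X Y Z : L),
      g V X * g V ⁅Y, Z⁆ - g V Y * g V ⁅X, Z⁆ + g V Z * g V ⁅X, Y⁆ = 0) :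
    (∀ (X Y : L), Y ∈ LinearMap.ker (g U) ⊓ LinearMap.ker (g V) →
        ⁅X, Y⁆ ∈ LinearMap.ker (g U) ⊓ LinearMap.ker (g V))
    ∧ (∀ (Y : L), Y ∈ LinearMap.ker (g U) ⊓ LinearMap.ker (g V) →
        J Y ∈ LinearMap.ker (g U) ⊓ LinearMap.ker (g V))
    ∧ (∀ (X Y Z : L), X ∈ LinearMap.ker (g U) ⊓ LinearMap.ker (g V) →
        Y ∈ LinearMap.ker (g U) ⊓ LinearMap.ker (g V) →
        Z ∈ LinearMap.ker (g U) ⊓ LinearMap.ker (g V) →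
        -(g ⁅X, Y⁆ (J Z)) + g ⁅X, Z⁆ (J Y) - g ⁅Y, Z⁆ (J X) = 0)
    ∧ (∀ (Y : L), Y ∈ LinearMap.ker (g U) ⊓ LinearMap.ker (g V) → Y ≠ 0 → 0 < g Y Y)
    ∧ (∀ (Y Z : L), Y ∈ LinearMap.ker (g U) ⊓ LinearMap.ker (g V) →
        Z ∈ LinearMap.ker (g U) ⊓ LinearMap.ker (g V) →
        g (J Y) (J Z) = g Y Z) := by

  have memh : ∀ Y : L, Y ∈ LinearMap.ker (g U) ⊓ LinearMap.ker (g V) ↔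
      g U Y = 0 ∧ g V Y = 0 := by
    intro Y
    simp [Submodule.mem_inf, LinearMap.mem_ker]
  have hgUJU : g U (J U) = 0 := by
    have h1 := hherm (J U) U
    rw [hJJ U] at h1
    have h2 : g (-U) (J U) = -(g U (J U)) := by simp
    rw [hgsym (J U) U] at h1
    linarith
  have hVU : g V U = 0 := by rw [hanti U, hgUJU]; ring
  have hVV : g V V = 1 := by rw [hVJU, hherm U U, hnorm]
  have hUJ : ∀ X : L, g U (J X) = -(g V X) := by
    intro X; rw [hanti X]; ring
  have hVJ : ∀ X : L, g V (J X) = g U X := by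
    intro X
    rw [hanti (J X), hJJ X]
    simp
  -- η(⁅U, Z⁆) = 0 when η(Z) = 0
  have lemA : ∀ Z : L, g V Z = 0 → g V ⁅U, Z⁆ = 0 := by
    intro Z hZ
    have h := hint V U Z
    rw [hVV, hVU, hZ] at h
    linarith
  -- η(⁅V, Y⁆) = 0 when Y ∈ h
  have lemB : ∀ Y : L, g U Y = 0 → g V Y = 0 → g V ⁅V, Y⁆ = 0 := by
    intro Y hU hV
    set Z : L := -(J Y) with hZdef
    have hJZ : J Z = Y := by rw [hZdef, map_neg, hJJ Y]; simp
    have hUZ : g U Z = 0 := by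
      rw [hZdef]; simp [hUJ Y, hV]
    have hVZ : g V Z = 0 := by
      rw [hZdef]; simp [hVJ Y, hU]
    have hN := hNJ U Z
    rw [hJZ, ← hVJU] at hN
    have hbr : ⁅V, Y⁆ = J ⁅V, Z⁆ + J ⁅U, Y⁆ + ⁅U, Z⁆ := by
      have : ⁅V, Y⁆ - J ⁅V, Z⁆ - J ⁅U, Y⁆ - ⁅U, Z⁆ = 0 := hN
      linear_combination (norm := module) this
    rw [hbr]
    simp only [map_add, hVJ, hdθ, lemA Z hVZ]
    ring
  -- the ideal property
  have ideal : ∀ X Y : L, g U Y = 0 → g V Y = 0 →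
      g U ⁅X, Y⁆ = 0 ∧ g V ⁅X, Y⁆ = 0 := by
    intro X Y hU hV
    refine ⟨hdθ X Y, ?_⟩
    have h := hint V X Y
    rw [hVV, hV, lemB Y hU hV] at h
    linarith
  refine ⟨?_, ?_, ?_, ?_, ?_⟩
  · intro X Y hY
    rw [memh] at hY ⊢
    exact ideal X Y hY.1 hY.2
  · intro Y hY
    rw [memh] at hY ⊢
    constructor
    · rw [hUJ Y, hY.2]; ring
    · rw [hVJ Y]; exact hY.1
  · intro X Y Z hX hY hZ
    rw [memh] at hX hY hZ
    have h := hLCK X Y Z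
    rw [hX.1, hY.1, hZ.1] at h
    linarith
  · intro Y _ hne
    exact hgpos Y hne
  · intro Y Z _ _
    exact hherm Y Z
end

section
/- Let g be an integrable LCK Lie algebra with |θ| = 1. Then ⟨U,V⟩ is a 2-dimensional Lie subalgebra of g (with [U,V] = (δθ + n)V), and g is isomorphic to the semidirect product ⟨U,V⟩ ⋉_ρ h, where h = ⟨U,V⟩^⊥ and ρ is given by the adjoint action. -/
/-!
Write `η = g V`. The integrability condition `η ∧ dη = 0` with `V` as one argument gives
`η ⁅U, Y⁆ = 0` for `Y ∈ h`; the vanishing Nijenhuis tensor at `(U, Y)` turns this into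
`η ⁅V, Y⁆ = 0`, and `η ∧ dη = 0` once more into `η ⁅X, Y⁆ = 0` for all `X`. Since `θ = g U` is
closed it kills every bracket, so `h` is an ideal. The LCK condition `dΩ = θ ∧ Ω` at `(U, V, J X)`
reads `g ⁅U, V⁆ X = η ⁅V, J X⁆`, so `⁅U, V⁆` is orthogonal to `h` and to `U`, i.e. `⁅U, V⁆ = c V`.
To find `c`, evaluate `dΩ = θ ∧ Ω` at `(U, Y, J Y)` and sum over a `g`-orthonormal basis: the left
side gives `tr (ad U - J ad U J) = 2 tr (ad U)`, and on the right, `η ∧ dη = 0` at `(V, Y, J Y)`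
makes the terms `η ⁅Y, J Y⁆` sum to `2c`, while the others sum to `-dim + 2`.
-/

open LinearMap (trace ker)
open Module (finrank)
open Submodule (span)

section OrthonormalBasis

variable {L ι : Type*} [AddCommGroup L] [Module ℝ L] [Fintype ι] [DecidableEq ι]
  {g : L →ₗ[ℝ] L →ₗ[ℝ] ℝ} {b : Module.Basis ι ℝ L}

theorem Module.Basis.repr_eq_of_orthonormal
    (hb : ∀ i j, g (b i) (b j) = if i = j then 1 else 0) (x : L) (i : ι) :
    b.repr x i = g (b i) x := by
  conv_rhs => rw [← b.sum_repr x]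
  rw [map_sum]
  simp [hb]

theorem Module.Basis.sum_mul_eq_of_orthonormal
    (hb : ∀ i j, g (b i) (b j) = if i = j then 1 else 0) (φ : L →ₗ[ℝ] ℝ) (x : L) :
    ∑ i, g (b i) x * φ (b i) = φ x := by
  conv_rhs => rw [← b.sum_repr x]
  simp [b.repr_eq_of_orthonormal hb]

theorem Module.Basis.trace_eq_sum_of_orthonormal
    (hb : ∀ i j, g (b i) (b j) = if i = j then 1 else 0) (f : L →ₗ[ℝ] L) :
    trace ℝ L f = ∑ i, g (b i) (f (b i)) := by
  simp [LinearMap.trace_eq_matrix_trace ℝ b, Matrix.trace, LinearMap.toMatrix_apply,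
    b.repr_eq_of_orthonormal hb]

end OrthonormalBasis

theorem exists_basis_orthonormal_of_pos {L : Type*} [AddCommGroup L] [Module ℝ L]
    [FiniteDimensional ℝ L] {g : L →ₗ[ℝ] L →ₗ[ℝ] ℝ} (hgsym : ∀ X Y, g X Y = g Y X)
    (hgpos : ∀ X, X ≠ 0 → 0 < g X X) :
    ∃ b : Module.Basis (Fin (finrank ℝ L)) ℝ L,
      ∀ i j, g (b i) (b j) = if i = j then 1 else 0 := by
  let core : InnerProductSpace.Core ℝ L :=
    { inner := fun x y => g x y
      conj_inner_symm := fun x y => by simpa using hgsym y x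
      re_inner_nonneg := fun x => by
        rcases eq_or_ne x 0 with rfl | hx
        · simp
        · simpa using (hgpos x hx).le
      add_left := fun x y z => by simp
      smul_left := fun x y r => by simp
      definite := fun x hx => by_contra fun h => (hgpos x h).ne' (by simpa using hx) }
  let _ : NormedAddCommGroup L := core.toNormedAddCommGroup
  let _ : InnerProductSpace ℝ L := .ofCore core.toCore
  refine ⟨(stdOrthonormalBasis ℝ L).toBasis, fun i j => ?_⟩
  rw [OrthonormalBasis.coe_toBasis]
  exact orthonormal_iff_ite.mp (stdOrthonormalBasis ℝ L).orthonormal i j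

theorem LinearMap.trace_mul_mul_eq_neg {L : Type*} [AddCommGroup L] [Module ℝ L]
    {J : L →ₗ[ℝ] L} (hJJ : ∀ X, J (J X) = -X) (f : L →ₗ[ℝ] L) :
    trace ℝ L (J * f * J) = -trace ℝ L f := by
  have : J * J = -1 := LinearMap.ext hJJ
  rw [mul_assoc, trace_mul_comm, mul_assoc, this]
  simp

section Hermitian

variable {L : Type*} [AddCommGroup L] [Module ℝ L] {g : L →ₗ[ℝ] L →ₗ[ℝ] ℝ} {J : L →ₗ[ℝ] L}

theorem apply_J_left_eq_neg (hJJ : ∀ X, J (J X) = -X) (hherm : ∀ X Y, g (J X) (J Y) = g X Y)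
    (X Y : L) : g (J X) Y = -g X (J Y) := by
  have := hherm X (J Y)
  rw [hJJ, map_neg] at this
  linarith

theorem apply_J_self_eq_zero (hgsym : ∀ X Y, g X Y = g Y X) (hJJ : ∀ X, J (J X) = -X)
    (hherm : ∀ X Y, g (J X) (J Y) = g X Y) (X : L) : g X (J X) = 0 := by
  have := apply_J_left_eq_neg hJJ hherm X X
  rw [hgsym] at this
  linarith

end Hermitian

section Orthogonal

variable {L : Type*} [AddCommGroup L] [Module ℝ L] {g : L →ₗ[ℝ] L →ₗ[ℝ] ℝ} {U V : L}

theorem isCompl_span_pair_ker_inf_ker (hUU : g U U = 1) (hVV : g V V = 1) (hUV : g U V = 0)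
    (hVU : g V U = 0) : IsCompl (span ℝ {U, V}) (ker (g U) ⊓ ker (g V)) := by
  constructor
  · rw [Submodule.disjoint_def]
    rintro _ hX ⟨hXU, hXV⟩
    obtain ⟨a, b, rfl⟩ := Submodule.mem_span_pair.mp hX
    simp_all
  · rw [codisjoint_iff, eq_top_iff]
    intro X _
    refine Submodule.mem_sup.mpr
      ⟨g U X • U + g V X • V, ?_, X - (g U X • U + g V X • V), ?_, by abel⟩
    · exact Submodule.mem_span_pair.mpr ⟨_, _, rfl⟩
    · simp [hUU, hVV, hUV, hVU]

theorem eq_smul_of_forall_ker_inf_ker (hgpos : ∀ X, X ≠ 0 → 0 < g X X) (hVV : g V V = 1)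
    (hUV : g U V = 0) {X : L} (hUX : g U X = 0)
    (hX : ∀ Y, g U Y = 0 → g V Y = 0 → g X Y = 0) : X = g V X • V := by
  set W := X - g V X • V
  have hUW : g U W = 0 := by simp [W, hUX, hUV]
  have hVW : g V W = 0 := by simp [W, hVV]
  have hWW : g W W = 0 := by simp [W, hX W hUW hVW, hVW]
  by_contra hne
  exact (hgpos W (sub_ne_zero.mpr hne)).ne' hWW

end Orthogonal

theorem lie_mem_span_pair {R L : Type*} [CommRing R] [LieRing L] [LieAlgebra R L] {U V X Y : L}
    (hUV : ⁅U, V⁆ ∈ span R {U, V}) (hX : X ∈ span R {U, V}) (hY : Y ∈ span R {U, V}) :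
    ⁅X, Y⁆ ∈ span R {U, V} := by
  obtain ⟨a, b, rfl⟩ := Submodule.mem_span_pair.mp hX
  obtain ⟨c, d, rfl⟩ := Submodule.mem_span_pair.mp hY
  have hVU : ⁅V, U⁆ ∈ span R {U, V} := by rw [← lie_skew]; exact neg_mem hUV
  simp only [lie_add, add_lie, smul_lie, lie_smul, lie_self, smul_zero, zero_add, add_zero]
  exact add_mem (Submodule.smul_mem _ _ (Submodule.smul_mem _ _ hVU))
    (Submodule.smul_mem _ _ (Submodule.smul_mem _ _ hUV))

namespace LCK

variable {L : Type*} [LieRing L] [LieAlgebra ℝ L] {g : L →ₗ[ℝ] L →ₗ[ℝ] ℝ} {J : L →ₗ[ℝ] L}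
  {U V : L}

theorem apply_lie_U_eq_zero
    (hint : ∀ X Y Z : L, g V X * g V ⁅Y, Z⁆ - g V Y * g V ⁅X, Z⁆ + g V Z * g V ⁅X, Y⁆ = 0)
    (hVU : g V U = 0) (hVV : g V V = 1) {Y : L} (hVY : g V Y = 0) : g V ⁅U, Y⁆ = 0 := by
  simpa [hVU, hVV, hVY] using hint U Y V

theorem apply_lie_V_eq_zero (hJJ : ∀ X, J (J X) = -X) (hherm : ∀ X Y, g (J X) (J Y) = g X Y)
    (hNJ : ∀ X Y : L, ⁅J X, J Y⁆ - J ⁅J X, Y⁆ - J ⁅X, J Y⁆ - ⁅X, Y⁆ = 0) (hVJU : V = J U)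
    (hdθ : ∀ X Y : L, g U ⁅X, Y⁆ = 0)
    (hint : ∀ X Y Z : L, g V X * g V ⁅Y, Z⁆ - g V Y * g V ⁅X, Z⁆ + g V Z * g V ⁅X, Y⁆ = 0)
    (hVU : g V U = 0) (hVV : g V V = 1) {Y : L} (hUY : g U Y = 0) : g V ⁅V, Y⁆ = 0 := by
  have hanti (Z : L) : g V Z = -g U (J Z) := hVJU ▸ apply_J_left_eq_neg hJJ hherm U Z
  have hVJY : g V (J Y) = 0 := by rw [hVJU, hherm, hUY]
  have hN : J ⁅V, Y⁆ = ⁅V, J Y⁆ - J ⁅U, J Y⁆ - ⁅U, Y⁆ := by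
    rw [← sub_eq_zero, ← neg_eq_zero, ← hNJ U Y, hVJU]
    abel
  calc g V ⁅V, Y⁆ = g U (J ⁅U, J Y⁆) := by simp [hanti ⁅V, Y⁆, hN, hdθ]
    _ = 0 := by rw [← neg_eq_zero, ← hanti, apply_lie_U_eq_zero hint hVU hVV hVJY]

theorem apply_lie_eq_zero (hJJ : ∀ X, J (J X) = -X) (hherm : ∀ X Y, g (J X) (J Y) = g X Y)
    (hNJ : ∀ X Y : L, ⁅J X, J Y⁆ - J ⁅J X, Y⁆ - J ⁅X, J Y⁆ - ⁅X, Y⁆ = 0) (hVJU : V = J U)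
    (hdθ : ∀ X Y : L, g U ⁅X, Y⁆ = 0)
    (hint : ∀ X Y Z : L, g V X * g V ⁅Y, Z⁆ - g V Y * g V ⁅X, Z⁆ + g V Z * g V ⁅X, Y⁆ = 0)
    (hVU : g V U = 0) (hVV : g V V = 1) (X : L) {Y : L} (hUY : g U Y = 0) (hVY : g V Y = 0) :
    g V ⁅X, Y⁆ = 0 := by
  have hVYV : g V ⁅Y, V⁆ = 0 := by
    rw [← lie_skew, map_neg, apply_lie_V_eq_zero hJJ hherm hNJ hVJU hdθ hint hVU hVV hUY,
      neg_zero]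
  simpa [hVY, hVV, hVYV] using hint X Y V

theorem apply_lie_U_V (hgsym : ∀ X Y, g X Y = g Y X) (hJJ : ∀ X, J (J X) = -X)
    (hherm : ∀ X Y, g (J X) (J Y) = g X Y) (hVJU : V = J U) (hnorm : g U U = 1)
    (hdθ : ∀ X Y : L, g U ⁅X, Y⁆ = 0)
    (hLCK : ∀ X Y Z : L, -(g ⁅X, Y⁆ (J Z)) + g ⁅X, Z⁆ (J Y) - g ⁅Y, Z⁆ (J X)
      = g U X * g Y (J Z) - g U Y * g X (J Z) + g U Z * g X (J Y)) (X : L) :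
    g ⁅U, V⁆ X = g V ⁅V, J X⁆ := by
  have hJV : J V = -U := by rw [hVJU, hJJ]
  have hUV : g U V = 0 := hVJU ▸ apply_J_self_eq_zero hgsym hJJ hherm U
  have hUJX : g U (J X) = -g V X := by rw [hVJU, apply_J_left_eq_neg hJJ hherm, neg_neg]
  have h := hLCK U V (J X)
  rw [← hVJU, hJJ, hJV] at h
  simp only [map_neg, hUJX, hnorm, hUV] at h
  rw [hgsym ⁅U, J X⁆, hgsym ⁅V, J X⁆, hdθ] at h
  linarith

theorem lie_U_V_eq_smul (hgsym : ∀ X Y, g X Y = g Y X) (hgpos : ∀ X, X ≠ 0 → 0 < g X X)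
    (hJJ : ∀ X, J (J X) = -X) (hherm : ∀ X Y, g (J X) (J Y) = g X Y)
    (hNJ : ∀ X Y : L, ⁅J X, J Y⁆ - J ⁅J X, Y⁆ - J ⁅X, J Y⁆ - ⁅X, Y⁆ = 0) (hVJU : V = J U)
    (hnorm : g U U = 1) (hdθ : ∀ X Y : L, g U ⁅X, Y⁆ = 0)
    (hLCK : ∀ X Y Z : L, -(g ⁅X, Y⁆ (J Z)) + g ⁅X, Z⁆ (J Y) - g ⁅Y, Z⁆ (J X)
      = g U X * g Y (J Z) - g U Y * g X (J Z) + g U Z * g X (J Y))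
    (hint : ∀ X Y Z : L, g V X * g V ⁅Y, Z⁆ - g V Y * g V ⁅X, Z⁆ + g V Z * g V ⁅X, Y⁆ = 0) :
    ⁅U, V⁆ = g V ⁅U, V⁆ • V := by
  have hUV : g U V = 0 := hVJU ▸ apply_J_self_eq_zero hgsym hJJ hherm U
  have hVU : g V U = 0 := (hgsym V U).trans hUV
  have hVV : g V V = 1 := hVJU ▸ (hherm U U).trans hnorm
  refine eq_smul_of_forall_ker_inf_ker hgpos hVV hUV (hdθ U V) fun Y _ hVY => ?_
  rw [apply_lie_U_V hgsym hJJ hherm hVJU hnorm hdθ hLCK]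
  have hUJY : g U (J Y) = 0 := by rw [hVJU, apply_J_left_eq_neg hJJ hherm] at hVY; linarith
  exact apply_lie_V_eq_zero hJJ hherm hNJ hVJU hdθ hint hVU hVV hUJY

theorem apply_ad_sub_conj_ad (hgsym : ∀ X Y, g X Y = g Y X) (hJJ : ∀ X, J (J X) = -X)
    (hherm : ∀ X Y, g (J X) (J Y) = g X Y) (hVJU : V = J U) (hnorm : g U U = 1)
    (hLCK : ∀ X Y Z : L, -(g ⁅X, Y⁆ (J Z)) + g ⁅X, Z⁆ (J Y) - g ⁅Y, Z⁆ (J X)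
      = g U X * g Y (J Z) - g U Y * g X (J Z) + g U Z * g X (J Y)) (Y : L) :
    g Y ((LieAlgebra.ad ℝ L U - J * LieAlgebra.ad ℝ L U * J) Y)
      = g V ⁅Y, J Y⁆ - g Y Y + g U Y ^ 2 + g V Y ^ 2 := by
  have hUJY : g U (J Y) = -g V Y := by rw [hVJU, apply_J_left_eq_neg hJJ hherm, neg_neg]
  have h := hLCK U Y (J Y)
  rw [← hVJU, hJJ] at h
  simp only [map_neg, hUJY, hnorm] at h
  simp only [LinearMap.sub_apply, Module.End.mul_apply, LieAlgebra.ad_apply, map_sub]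
  rw [hgsym Y, ← neg_neg (g Y (J _)), ← apply_J_left_eq_neg hJJ hherm, hgsym (J Y)]
  rw [hgsym ⁅Y, J Y⁆] at h
  linear_combination h

theorem apply_lie_J_self (hherm : ∀ X Y, g (J X) (J Y) = g X Y) (hVJU : V = J U)
    (hint : ∀ X Y Z : L, g V X * g V ⁅Y, Z⁆ - g V Y * g V ⁅X, Z⁆ + g V Z * g V ⁅X, Y⁆ = 0)
    (hVV : g V V = 1) (Y : L) :
    g V ⁅Y, J Y⁆ = g V Y * g V ⁅V, J Y⁆ - g U Y * g V ⁅V, Y⁆ := by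
  have hVJY : g V (J Y) = g U Y := by rw [hVJU, hherm]
  have h := hint V Y (J Y)
  rw [hVV, hVJY] at h
  linarith

theorem sum_apply_lie_J_eq {ι : Type*} [Fintype ι] [DecidableEq ι] {b : Module.Basis ι ℝ L}
    (hb : ∀ i j, g (b i) (b j) = if i = j then 1 else 0) (hgsym : ∀ X Y, g X Y = g Y X)
    (hJJ : ∀ X, J (J X) = -X) (hherm : ∀ X Y, g (J X) (J Y) = g X Y) (hVJU : V = J U)
    (hint : ∀ X Y Z : L, g V X * g V ⁅Y, Z⁆ - g V Y * g V ⁅X, Z⁆ + g V Z * g V ⁅X, Y⁆ = 0)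
    (hVV : g V V = 1) :
    ∑ i, g V ⁅b i, J (b i)⁆ = 2 * g V ⁅U, V⁆ := by
  set β := g V ∘ₗ LieAlgebra.ad ℝ L V
  have hβJ : ∑ i, g V (b i) * β (J (b i)) = g V ⁅U, V⁆ := calc
    _ = (β ∘ₗ J) V := by
      simp_rw [hgsym V (b _)]
      exact b.sum_mul_eq_of_orthonormal hb (β ∘ₗ J) V
    _ = g V ⁅U, V⁆ := by simp [β, hVJU, hJJ]
  have hβ : ∑ i, g U (b i) * β (b i) = -g V ⁅U, V⁆ := calc
    _ = g V ⁅V, U⁆ := by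
      simp_rw [hgsym U (b _)]
      exact b.sum_mul_eq_of_orthonormal hb β U
    _ = -g V ⁅U, V⁆ := by rw [← lie_skew, map_neg]
  simp only [apply_lie_J_self hherm hVJU hint hVV, Finset.sum_sub_distrib]
  simp only [β, LinearMap.comp_apply, LieAlgebra.ad_apply] at hβJ hβ
  rw [hβJ, hβ]
  ring

theorem apply_lie_U_V_eq_trace_add [FiniteDimensional ℝ L] (hgsym : ∀ X Y, g X Y = g Y X)
    (hgpos : ∀ X, X ≠ 0 → 0 < g X X) (hJJ : ∀ X, J (J X) = -X)
    (hherm : ∀ X Y, g (J X) (J Y) = g X Y) (hVJU : V = J U) (hnorm : g U U = 1)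
    (hLCK : ∀ X Y Z : L, -(g ⁅X, Y⁆ (J Z)) + g ⁅X, Z⁆ (J Y) - g ⁅Y, Z⁆ (J X)
      = g U X * g Y (J Z) - g U Y * g X (J Z) + g U Z * g X (J Y))
    (hint : ∀ X Y Z : L, g V X * g V ⁅Y, Z⁆ - g V Y * g V ⁅X, Z⁆ + g V Z * g V ⁅X, Y⁆ = 0)
    {n : ℕ} (hdim : finrank ℝ L = 2 * n + 2) :
    g V ⁅U, V⁆ = trace ℝ L (LieAlgebra.ad ℝ L U) + n := by
  obtain ⟨b, hb⟩ := exists_basis_orthonormal_of_pos hgsym hgpos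
  have hVV : g V V = 1 := hVJU ▸ (hherm U U).trans hnorm
  have hsum_sq {X : L} (hX : g X X = 1) : ∑ i, g X (b i) ^ 2 = 1 := by
    simpa [sq, hgsym X, hX] using b.sum_mul_eq_of_orthonormal hb (g X) X
  have hsum_one : ∑ i, g (b i) (b i) = 2 * n + 2 := by simp [hb, hdim]
  have := calc
    2 * trace ℝ L (LieAlgebra.ad ℝ L U)
      = trace ℝ L (LieAlgebra.ad ℝ L U - J * LieAlgebra.ad ℝ L U * J) := by
        rw [map_sub, LinearMap.trace_mul_mul_eq_neg hJJ]
        ring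
    _ = ∑ i, (g V ⁅b i, J (b i)⁆ - g (b i) (b i) + g U (b i) ^ 2 + g V (b i) ^ 2) := by
        simp only [b.trace_eq_sum_of_orthonormal hb,
          apply_ad_sub_conj_ad hgsym hJJ hherm hVJU hnorm hLCK]
    _ = 2 * g V ⁅U, V⁆ - (2 * n + 2) + 1 + 1 := by
        simp only [Finset.sum_add_distrib, Finset.sum_sub_distrib, hsum_one, hsum_sq hnorm,
          hsum_sq hVV, sum_apply_lie_J_eq hb hgsym hJJ hherm hVJU hint hVV]
  linarith

end LCK

theorem statement10_general
    (L : Type*) [LieRing L] [LieAlgebra ℝ L]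
    (g : L →ₗ[ℝ] L →ₗ[ℝ] ℝ) (J : L →ₗ[ℝ] L) (U V : L)
    (hgsym : ∀ (X Y : L), g X Y = g Y X)
    (hgpos : ∀ (X : L), X ≠ 0 → 0 < g X X)
    (hJJ : ∀ (X : L), J (J X) = -X)
    (hherm : ∀ (X Y : L), g (J X) (J Y) = g X Y)
    (hNJ : ∀ (X Y : L), ⁅J X, J Y⁆ - J ⁅J X, Y⁆ - J ⁅X, J Y⁆ - ⁅X, Y⁆ = 0)
    (hVJU : V = J U)
    (hnorm : g U U = 1)
    (hdθ : ∀ (X Y : L), g U ⁅X, Y⁆ = 0)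
    (hLCK : ∀ (X Y Z : L),
      -(g ⁅X, Y⁆ (J Z)) + g ⁅X, Z⁆ (J Y) - g ⁅Y, Z⁆ (J X)
      = g U X * g Y (J Z) - g U Y * g X (J Z) + g U Z * g X (J Y))
    (hint : ∀ (X Y Z : L),
      g V X * g V ⁅Y, Z⁆ - g V Y * g V ⁅X, Z⁆ + g V Z * g V ⁅X, Y⁆ = 0)
    [FiniteDimensional ℝ L] (n : ℕ) (hdim : Module.finrank ℝ L = 2 * n + 2) :
    ⁅U, V⁆ = (LinearMap.trace ℝ L (LieAlgebra.ad ℝ L U) + (n : ℝ)) • V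
    ∧ (∀ X Y, X ∈ Submodule.span ℝ ({U, V} : Set L) →
        Y ∈ Submodule.span ℝ ({U, V} : Set L) →
        ⁅X, Y⁆ ∈ Submodule.span ℝ ({U, V} : Set L))
    ∧ (∀ (X Y : L), Y ∈ LinearMap.ker (g U) ⊓ LinearMap.ker (g V) →
        ⁅X, Y⁆ ∈ LinearMap.ker (g U) ⊓ LinearMap.ker (g V))
    ∧ IsCompl (Submodule.span ℝ ({U, V} : Set L))
        (LinearMap.ker (g U) ⊓ LinearMap.ker (g V)) := by
  have hUV : g U V = 0 := hVJU ▸ apply_J_self_eq_zero hgsym hJJ hherm U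
  have hVU : g V U = 0 := (hgsym V U).trans hUV
  have hVV : g V V = 1 := hVJU ▸ (hherm U U).trans hnorm
  have hbracket := LCK.lie_U_V_eq_smul hgsym hgpos hJJ hherm hNJ hVJU hnorm hdθ hLCK hint
  have hbracket_mem : ⁅U, V⁆ ∈ span ℝ {U, V} :=
    hbracket ▸ Submodule.smul_mem _ _ (Submodule.subset_span (by simp))
  refine ⟨?_, fun _ _ => lie_mem_span_pair hbracket_mem, ?_,
    isCompl_span_pair_ker_inf_ker hnorm hVV hUV hVU⟩
  · rwa [← LCK.apply_lie_U_V_eq_trace_add hgsym hgpos hJJ hherm hVJU hnorm hLCK hint hdim]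
  · rintro X Y ⟨hUY, hVY⟩
    exact ⟨hdθ X Y, LCK.apply_lie_eq_zero hJJ hherm hNJ hVJU hdθ hint hVU hVV X hUY hVY⟩

/-- An integrable LCK Lie algebra `L` of dimension `2n+2` with `|θ| = 1`
(same setup as Statement 9).  With `δθ = tr(ad_U)`, the conclusion is:
`⁅U,V⁆ = (δθ + n) • V`; `⟨U,V⟩ = span{U,V}` is a Lie subalgebra;
`h = ⟨U,V⟩^⊥` is an ideal; and `L` is the (vector space) direct sum of
`⟨U,V⟩` and `h`, i.e. `L ≅ ⟨U,V⟩ ⋉_ρ h` with `ρ` the adjoint action. -/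
theorem statement10
    (L : Type*) [LieRing L] [LieAlgebra ℝ L]
    (g : L →ₗ[ℝ] L →ₗ[ℝ] ℝ) (J : L →ₗ[ℝ] L) (U V : L)
    (hgsym : ∀ (X Y : L), g X Y = g Y X)
    (hgpos : ∀ (X : L), X ≠ 0 → 0 < g X X)
    (hJJ : ∀ (X : L), J (J X) = -X)
    (hherm : ∀ (X Y : L), g (J X) (J Y) = g X Y)
    (hNJ : ∀ (X Y : L), ⁅J X, J Y⁆ - J ⁅J X, Y⁆ - J ⁅X, J Y⁆ - ⁅X, Y⁆ = 0)
    (hVJU : V = J U)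
    (hanti : ∀ (X : L), g V X = -(g U (J X)))
    (hnorm : g U U = 1)
    (hdθ : ∀ (X Y : L), g U ⁅X, Y⁆ = 0)
    (hLCK : ∀ (X Y Z : L),
      -(g ⁅X, Y⁆ (J Z)) + g ⁅X, Z⁆ (J Y) - g ⁅Y, Z⁆ (J X)
      = g U X * g Y (J Z) - g U Y * g X (J Z) + g U Z * g X (J Y))
    (hint : ∀ (X Y Z : L),
      g V X * g V ⁅Y, Z⁆ - g V Y * g V ⁅X, Z⁆ + g V Z * g V ⁅X, Y⁆ = 0)
    [FiniteDimensional ℝ L] (n : ℕ) (hdim : Module.finrank ℝ L = 2 * n + 2) :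
    ⁅U, V⁆ = (LinearMap.trace ℝ L (LieAlgebra.ad ℝ L U) + (n : ℝ)) • V
    ∧ (∀ X Y, X ∈ Submodule.span ℝ ({U, V} : Set L) →
        Y ∈ Submodule.span ℝ ({U, V} : Set L) →
        ⁅X, Y⁆ ∈ Submodule.span ℝ ({U, V} : Set L))
    ∧ (∀ (X Y : L), Y ∈ LinearMap.ker (g U) ⊓ LinearMap.ker (g V) →
        ⁅X, Y⁆ ∈ LinearMap.ker (g U) ⊓ LinearMap.ker (g V))
    ∧ IsCompl (Submodule.span ℝ ({U, V} : Set L))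
        (LinearMap.ker (g U) ⊓ LinearMap.ker (g V)) :=
  statement10_general L g J U V hgsym hgpos hJJ hherm hNJ hVJU hnorm hdθ hLCK hint n hdim
end

section
/- Let h ≅ ℝ² with orthonormal basis X, JX, abelian, and u,v ∈ End(h) satisfying [u,v] = v, [v+uJ,J] = 0, v*J + Jv = 0, J + u*J + Ju = 0, with rank(v) = 1 and vX = 0. Then necessarily u(X) = 0, u(JX) = −JX, v(X) = 0, v(JX) = X; i.e., in the basis (X,JX), [u] = [[0,0],[0,−1]] and [v] = [[0,1],[0,0]]. -/
/-- Same setup as Statement 17 (`H ≅ ℝ²` with orthonormal basis `X, JH X`, abelian,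
`u, v` satisfying `[u,v] = v`, `[v+uJ,J] = 0`, `v*J + Jv = 0`,
`J + u*J + Ju = 0`), now with `rank(v) = 1` and `v X = 0`.  Then necessarily
`u X = 0`, `u (JX) = -JX`, `v X = 0`, `v (JX) = X`; i.e. in the basis
`(X, JH X)`, `[u] = [[0,0],[0,-1]]` and `[v] = [[0,1],[0,0]]`. -/
theorem statement18
    (H : Type*) [AddCommGroup H] [Module ℝ H]
    (gH : H →ₗ[ℝ] H →ₗ[ℝ] ℝ) (JH : H →ₗ[ℝ] H) (X : H)
    (hgHsym : ∀ (Y Z : H), gH Y Z = gH Z Y)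
    (hJHJH : ∀ (Y : H), JH (JH Y) = -Y)
    (hX : gH X X = 1) (hXJX : gH X (JH X) = 0) (hJX : gH (JH X) (JH X) = 1)
    (hspan : ∀ Y : H, ∃ a b : ℝ, Y = a • X + b • JH X)
    (u v ustar vstar : H →ₗ[ℝ] H)
    (hustar : ∀ (Y Z : H), gH (ustar Y) Z = gH Y (u Z))
    (hvstar : ∀ (Y Z : H), gH (vstar Y) Z = gH Y (v Z))
    (huv : u ∘ₗ v - v ∘ₗ u = v)
    (hcond1 : (v + u ∘ₗ JH) ∘ₗ JH = JH ∘ₗ (v + u ∘ₗ JH))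
    (hcond2 : vstar ∘ₗ JH + JH ∘ₗ v = 0)
    (hcond3 : JH + ustar ∘ₗ JH + JH ∘ₗ u = 0)
    (hrank : LinearMap.rank v = 1)
    (hvX : v X = 0) :
    u X = 0 ∧ u (JH X) = -(JH X) ∧ v X = 0 ∧ v (JH X) = X := by
  have hJXX : gH (JH X) X = 0 := by rw [hgHsym]; exact hXJX
  obtain ⟨a, b, hu1⟩ := hspan (u X)
  obtain ⟨c, d, hu2⟩ := hspan (u (JH X))
  obtain ⟨p, q, hv2⟩ := hspan (v (JH X))
  -- coefficient extraction helper
  have hcoef : ∀ r s : ℝ, r • X + s • JH X = 0 → r = 0 ∧ s = 0 := by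
    intro r s h
    have h1 := congrArg (fun Y => gH Y X) h
    have h2 := congrArg (fun Y => gH Y (JH X)) h
    simp [map_add, map_smul, hX, hXJX, hJX, hJXX] at h1 h2
    exact ⟨h1, h2⟩
  -- q = 0 from cond2
  have hvsJX : vstar (JH X) = 0 := by
    have h := LinearMap.ext_iff.mp hcond2 X
    simp only [LinearMap.add_apply, LinearMap.comp_apply, LinearMap.zero_apply, hvX,
      map_zero, add_zero] at h
    exact h
  have hq : q = 0 := by
    have h := hvstar (JH X) (JH X)
    rw [hvsJX, hv2] at h
    simp [map_add, map_smul, hJXX, hJX] at h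
    linarith
  -- cond1 at X
  have h1 := LinearMap.ext_iff.mp hcond1 X
  simp only [LinearMap.add_apply, LinearMap.comp_apply] at h1
  rw [hJHJH, map_neg, hu1, hu2, hvX, hv2, zero_add, map_add, map_smul, map_smul,
    hJHJH] at h1
  have e1 : (p - a + d) • X + (q - b - c) • JH X = (0 : H) := by
    linear_combination (norm := module) h1
  obtain ⟨e1a, e1b⟩ := hcoef _ _ e1
  -- huv at JX
  have h2 := LinearMap.ext_iff.mp huv (JH X)
  simp only [LinearMap.sub_apply, LinearMap.comp_apply] at h2
  rw [hv2, hu2, map_add, map_smul, map_smul, map_add, map_smul, map_smul,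
    hu1, hu2, hvX, hv2] at h2
  have e2 : (p * a + q * c - d * p - p) • X + (p * b + q * d - d * q - q) • JH X = (0 : H) := by
    linear_combination (norm := module) h2
  obtain ⟨e2a, e2b⟩ := hcoef _ _ e2
  -- cond3 at X
  have h3 := LinearMap.ext_iff.mp hcond3 X
  simp only [LinearMap.add_apply, LinearMap.comp_apply, LinearMap.zero_apply] at h3
  have husJX : ustar (JH X) = b • X + (-1 - a) • JH X := by
    have : ustar (JH X) = -(JH X) - JH (u X) := by
      linear_combination (norm := module) h3
    rw [this, hu1, map_add, map_smul, map_smul, hJHJH]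
    module
  have hd : d = -1 - a := by
    have h := hustar (JH X) (JH X)
    rw [husJX, hu2] at h
    simp [map_add, map_smul, hJXX, hJX, hXJX] at h
    linarith
  -- p ≠ 0 from rank
  have hp : p ≠ 0 := by
    intro hp0
    have hv0 : v = 0 := by
      apply LinearMap.ext
      intro Y
      obtain ⟨r, s, hY⟩ := hspan Y
      rw [hY, map_add, map_smul, map_smul, hvX, hv2, hp0, hq]
      simp
    rw [hv0] at hrank
    simp at hrank
  -- solve the scalar system
  have ha : a = 0 := by
    have h' : p * (a - d - 1) = 0 := by linear_combination e2a - c * hq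
    rcases mul_eq_zero.mp h' with h | h
    · exact absurd h hp
    · linarith [hd]
  have hdval : d = -1 := by rw [hd, ha]; ring
  have hpval : p = 1 := by linarith [e1a, ha, hdval]
  have hb : b = 0 := by
    have : p * b = 0 := by rw [hq] at e2b; linarith
    rcases mul_eq_zero.mp this with h | h
    · exact absurd h hp
    · exact h
  have hc : c = 0 := by rw [hq, hb] at e1b; linarith
  refine ⟨?_, ?_, hvX, ?_⟩
  · rw [hu1, ha, hb]; simp
  · rw [hu2, hc, hdval]; module
  · rw [hv2, hpval, hq]; module
end

section
/- Define u, v ∈ End(ℝ²) (basis A, B, inner product making A, B orthonormal, JA = B) and a Lie bracket [A,B] = A on h = ℝ², by uA = −A, uB = 0, vA = 0, vB = −A. Then u and v are derivations of h, and they satisfy [u,v] = −v, v*J + Jv = 0, J + u*J + Ju = 0, and v + uJ = 0 (hence [v + uJ, J] = 0). -/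
/-- Let `H` be the 2-dimensional non-abelian Lie algebra with orthonormal basis
`A, B`, bracket `⁅A,B⁆ = A`, and Kähler structure `JH A = B`, `JH B = -A`.
Define `u, v ∈ End(H)` by `u A = -A`, `u B = 0`, `v A = 0`, `v B = -A`
(with `gH`-adjoints `ustar, vstar`).  Then `u` and `v` are derivations of `H`,
and they satisfy `[u,v] = -v`, `v*J + Jv = 0`, `J + u*J + Ju = 0`, and
`v + uJ = 0` (hence `[v + uJ, J] = 0`). -/
theorem statement19
    (H : Type*) [LieRing H] [LieAlgebra ℝ H]
    (gH : H →ₗ[ℝ] H →ₗ[ℝ] ℝ) (JH : H →ₗ[ℝ] H) (A B : H)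
    (hgHsym : ∀ (Y Z : H), gH Y Z = gH Z Y)
    (hA : gH A A = 1) (hB : gH B B = 1) (hAB : gH A B = 0)
    (hJA : JH A = B) (hJB : JH B = -A)
    (hJHJH : ∀ (Y : H), JH (JH Y) = -Y)
    (hbr : ⁅A, B⁆ = A)
    (hspan : ∀ Y : H, ∃ a b : ℝ, Y = a • A + b • B)
    (u v ustar vstar : H →ₗ[ℝ] H)
    (huA : u A = -A) (huB : u B = 0) (hvA : v A = 0) (hvB : v B = -A)
    (hustar : ∀ (Y Z : H), gH (ustar Y) Z = gH Y (u Z))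
    (hvstar : ∀ (Y Z : H), gH (vstar Y) Z = gH Y (v Z)) :
    (∀ (Y Z : H), u ⁅Y, Z⁆ = ⁅u Y, Z⁆ + ⁅Y, u Z⁆)
    ∧ (∀ (Y Z : H), v ⁅Y, Z⁆ = ⁅v Y, Z⁆ + ⁅Y, v Z⁆)
    ∧ u ∘ₗ v - v ∘ₗ u = -v
    ∧ vstar ∘ₗ JH + JH ∘ₗ v = 0
    ∧ JH + ustar ∘ₗ JH + JH ∘ₗ u = 0
    ∧ v + u ∘ₗ JH = 0
    ∧ (v + u ∘ₗ JH) ∘ₗ JH = JH ∘ₗ (v + u ∘ₗ JH) := by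

  have brBA : ⁅B, A⁆ = -A := by rw [← lie_skew, hbr]
  have hBA : gH B A = 0 := by rw [hgHsym]; exact hAB
  have hext : ∀ (f g : H →ₗ[ℝ] H), f A = g A → f B = g B → f = g := by
    intro f g h1 h2
    ext Y
    obtain ⟨a, b, rfl⟩ := hspan Y
    simp [h1, h2]
  have coord : ∀ Y : H, Y = gH Y A • A + gH Y B • B := by
    intro Y
    obtain ⟨a, b, rfl⟩ := hspan Y
    simp [hA, hB, hAB, hBA]
  have hustarA : ustar A = -A := by
    have h1 : gH (ustar A) A = -1 := by rw [hustar, huA]; simp [hA]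
    have h2 : gH (ustar A) B = 0 := by rw [hustar, huB]; simp
    rw [coord (ustar A), h1, h2]; simp
  have hustarB : ustar B = 0 := by
    have h1 : gH (ustar B) A = 0 := by rw [hustar, huA]; simp [hBA]
    have h2 : gH (ustar B) B = 0 := by rw [hustar, huB]; simp
    rw [coord (ustar B), h1, h2]; simp
  have hvstarA : vstar A = -B := by
    have h1 : gH (vstar A) A = 0 := by rw [hvstar, hvA]; simp
    have h2 : gH (vstar A) B = -1 := by rw [hvstar, hvB]; simp [hA]
    rw [coord (vstar A), h1, h2]; simp
  have hvstarB : vstar B = 0 := by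
    have h1 : gH (vstar B) A = 0 := by rw [hvstar, hvA]; simp
    have h2 : gH (vstar B) B = 0 := by rw [hvstar, hvB]; simp [hBA]
    rw [coord (vstar B), h1, h2]; simp
  refine ⟨?_, ?_, ?_, ?_, ?_, ?_, ?_⟩
  · intro Y Z
    obtain ⟨a, b, rfl⟩ := hspan Y
    obtain ⟨c, d, rfl⟩ := hspan Z
    simp [add_lie, lie_add, smul_lie, lie_smul, hbr, brBA, huA, huB, smul_smul]
    ring_nf
    module
  · intro Y Z
    obtain ⟨a, b, rfl⟩ := hspan Y
    obtain ⟨c, d, rfl⟩ := hspan Z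
    simp [add_lie, lie_add, smul_lie, lie_smul, hbr, brBA, hvA, hvB, smul_smul]
  · apply hext <;> simp [huA, huB, hvA, hvB]
  · apply hext <;> simp [hJA, hJB, hvA, hvB, hvstarA, hvstarB]
  · apply hext <;> simp [hJA, hJB, huA, huB, hustarA, hustarB]
  · apply hext <;> simp [hJA, hJB, huA, huB, hvA, hvB]
  · apply hext <;> simp [hJA, hJB, huA, huB, hvA, hvB, hJHJH]
end
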